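/- arXiv:math/9310205 — 5 statements merged into one kernel-verified Lean document; each statement's English description precedes it below -/
import Mathlib

section
/- Let G be any group and A, B ∈ G with A² = B³ = 1. Then (AB)⁶ = [B⁻¹ABA, B(AB)²], where [X,Y] = X⁻¹Y⁻¹XY. -/
theorem stmt2 {G : Type*} [Group G] (A B : G) (hA : A ^ 2 = 1) (hB : B ^ 3 = 1) :
    (A * B) ^ 6 = (B⁻¹ * A * B * A)⁻¹ * (B * (A * B) ^ 2)⁻¹ *
      (B⁻¹ * A * B * A) * (B * (A * B) ^ 2) := by
  have hA' : A⁻¹ = A := by rw [inv_eq_iff_mul_eq_one, ← pow_two, hA]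
  have hB' : B⁻¹ = B * B := by rw [inv_eq_iff_mul_eq_one, show B*(B*B)=B^3 from by rw [pow_succ, pow_succ, pow_one, mul_assoc], hB]
  have h2 : ∀ x : G, A * (A * x) = x := fun x => by rw [← mul_assoc, ← pow_two, hA, one_mul]
  have h3 : ∀ x : G, B * (B * (B * x)) = x := fun x => by
    rw [← mul_assoc, ← mul_assoc, show B*B*B = B^3 from by rw [pow_succ, pow_succ, pow_one], hB, one_mul]
  simp only [pow_succ, pow_zero, one_mul, mul_inv_rev, hA', hB', mul_assoc, h2, h3,
    mul_one]
end

section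
/- Let G be any group and A, B ∈ G with A³ = B³ = 1. Then (AB)³ = [BA⁻¹, BAB], where [X,Y] = X⁻¹Y⁻¹XY. -/
theorem stmt3 {G : Type*} [Group G] (A B : G) (hA : A ^ 3 = 1) (hB : B ^ 3 = 1) :
    (A * B) ^ 3 = (B * A⁻¹)⁻¹ * (B * A * B)⁻¹ * (B * A⁻¹) * (B * A * B) := by
  have hA1 : A * A * A = 1 := by rw [pow_succ, pow_succ, pow_one] at hA; exact hA
  have hB1 : B * B * B = 1 := by rw [pow_succ, pow_succ, pow_one] at hB; exact hB
  have hA' : A⁻¹ = A * A := by rw [inv_eq_iff_mul_eq_one, mul_assoc] at *; exact hA1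
  have hB' : B⁻¹ = B * B := by rw [inv_eq_iff_mul_eq_one, mul_assoc] at *; exact hB1
  have hA3 : ∀ x : G, A * (A * (A * x)) = x := by
    intro x; rw [← mul_assoc, ← mul_assoc, hA1, one_mul]
  have hB3 : ∀ x : G, B * (B * (B * x)) = x := by
    intro x; rw [← mul_assoc, ← mul_assoc, hB1, one_mul]
  simp only [pow_succ, pow_zero, one_mul, mul_inv_rev, hA', hB', mul_assoc, hA3, hB3]
end

section
/- Let G be any group and A, B ∈ G with A³ = B³ = 1. Then (AB)³ = [BA², BAB], where [X,Y] = X⁻¹Y⁻¹XY. (This is the commutator expression appearing in the corollary for free products with no elements of even order.) -/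
theorem stmt6 {G : Type*} [Group G] (A B : G) (hA : A ^ 3 = 1) (hB : B ^ 3 = 1) :
    (A * B) ^ 3 = (B * A ^ 2)⁻¹ * (B * A * B)⁻¹ * (B * A ^ 2) * (B * A * B) := by
  have hA' : A * A * A = 1 := by simpa [pow_succ, mul_assoc] using hA
  have hB' : B * B * B = 1 := by simpa [pow_succ, mul_assoc] using hB
  have hAi : A⁻¹ = A * A := by rw [eq_comm, eq_inv_iff_mul_eq_one]; exact hA'
  have hBi : B⁻¹ = B * B := by rw [eq_comm, eq_inv_iff_mul_eq_one]; exact hB'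
  have hA3 : ∀ x : G, A * (A * (A * x)) = x := by
    intro x; rw [← mul_assoc, ← mul_assoc, hA', one_mul]
  have hB3 : ∀ x : G, B * (B * (B * x)) = x := by
    intro x; rw [← mul_assoc, ← mul_assoc, hB', one_mul]
  simp only [pow_succ, pow_zero, one_mul, mul_inv_rev, hAi, hBi, mul_assoc, hA3, hB3]
end

section
/- Let G = A * B be the free product (coproduct) of two nontrivial groups A and B. If an element V of G has finite order, then V is conjugate in G to an element of the image of A or to an element of the image of B. -/
open Monoid Monoid.CoprodI

section Main
variable {ι : Type*} {G : ι → Type*} [∀ i, Group (G i)]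

lemma prod_inj [DecidableEq ι] [∀ i, DecidableEq (G i)] :
    Function.Injective (Word.prod : Word G → CoprodI G) := by
  have : (Word.prod : Word G → CoprodI G) = ⇑(Word.equiv).symm := rfl
  rw [this]
  exact (Word.equiv).symm.injective

lemma prod_equiv [DecidableEq ι] [∀ i, DecidableEq (G i)] (V : CoprodI G) :
    (Word.equiv V).prod = V := Word.equiv.symm_apply_apply V

lemma equiv_prod [DecidableEq ι] [∀ i, DecidableEq (G i)] (w : Word G) :
    Word.equiv (Word.prod w) = w := Word.equiv.apply_symm_apply w

lemma word_prod_def (w : Word G) :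
    Word.prod w = (w.toList.map fun l => CoprodI.of l.snd).prod := rfl

lemma neword_prod_ne_one [DecidableEq ι] [∀ i, DecidableEq (G i)] {i j : ι}
    (w : NeWord G i j) : w.prod ≠ 1 := by
  intro hw
  have h1 : w.toWord.prod = Word.empty.prod := by
    simpa [NeWord.prod] using hw
  have := prod_inj h1
  have := w.toList_ne_nil
  apply this
  have h2 : w.toWord.toList = (Word.empty : Word G).toList := by rw [prod_inj h1]
  simpa [NeWord.toWord, Word.empty] using h2

lemma neword_pow_ne_one [DecidableEq ι] [∀ i, DecidableEq (G i)] {i j : ι}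
    (hij : i ≠ j) (w : NeWord G i j) (n : ℕ) (hn : 1 ≤ n) : w.prod ^ n ≠ 1 := by
  have key : ∀ m : ℕ, ∃ u : NeWord G i j, u.prod = w.prod ^ (m + 1) := by
    intro m
    induction m with
    | zero => exact ⟨w, by simp⟩
    | succ m ih =>
      obtain ⟨u, hu⟩ := ih
      exact ⟨u.append hij.symm w,
        by rw [NeWord.append_prod, hu, pow_succ, pow_succ]; ring_nf; group⟩
  obtain ⟨m, rfl⟩ := Nat.exists_eq_add_of_le hn
  obtain ⟨u, hu⟩ := key m
  rw [add_comm 1 m, ← hu]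
  exact neword_prod_ne_one u

lemma main_coprodI [DecidableEq ι] [∀ i, DecidableEq (G i)] [Nonempty ι]
    (n : ℕ) (hn : 1 ≤ n) :
    ∀ (k : ℕ) (V : CoprodI G), (Word.equiv V).toList.length ≤ k → V ^ n = 1 →
      ∃ (W : CoprodI G) (i : ι) (g : G i), W⁻¹ * V * W = CoprodI.of g := by
  intro k
  induction k with
  | zero =>
    intro V hlen _
    have hV : V = 1 := by
      have hemp : Word.equiv V = Word.empty := by
        apply Word.ext
        exact List.length_eq_zero_iff.mp (Nat.le_zero.mp hlen)
      calc V = (Word.equiv V).prod := (prod_equiv V).symm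
        _ = 1 := by rw [hemp]; rfl
    exact ⟨1, Classical.arbitrary ι, 1, by simp [hV]⟩
  | succ k ih =>
    intro V hlen hVn
    rcases Nat.lt_or_ge (Word.equiv V).toList.length (k + 1) with hlt | hge
    · exact ih V (Nat.lt_succ_iff.mp hlt) hVn
    have hlen' : (Word.equiv V).toList.length = k + 1 := le_antisymm hlen hge
    obtain ⟨⟨i, m₁⟩, t, hl⟩ : ∃ a t, (Word.equiv V).toList = a :: t := by
      cases hli : (Word.equiv V).toList with
      | nil => rw [hli] at hlen'; simp at hlen'
      | cons a t => exact ⟨a, t, rfl⟩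
    rcases t.eq_nil_or_concat with rfl | ⟨middle, ⟨j, mk⟩, rfl⟩
    · -- single letter
      refine ⟨1, i, m₁, ?_⟩
      have hV1 : V = CoprodI.of m₁ := by
        conv_lhs => rw [← prod_equiv V]
        rw [word_prod_def, hl]
        simp
      simp [hV1]
    rcases eq_or_ne i j with rfl | hij
    · -- conjugation case: first and last letters in same factor
      set Q : CoprodI G := (middle.map fun l => CoprodI.of l.snd).prod with hQdef
      have hV_eq : V = CoprodI.of m₁ * Q * CoprodI.of mk := by
        conv_lhs => rw [← prod_equiv V]
        rw [word_prod_def, hl]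
        simp [hQdef, List.map_append, List.prod_append, mul_assoc]
      set W₀ : CoprodI G := CoprodI.of m₁ * Q with hW₀
      have hconj : W₀⁻¹ * V * W₀ = CoprodI.of (mk * m₁) * Q := by
        rw [hV_eq, map_mul, hW₀]; group
      have hmid_ne1 : ∀ a ∈ middle, a.snd ≠ (1 : G a.fst) := by
        intro a ha
        exact (Word.equiv V).ne_one a (by rw [hl]; simp [ha])
      have hmid_chain : middle.Chain' fun a b => a.fst ≠ b.fst := by
        refine ((Word.equiv V).chain_ne).infix ?_
        exact ⟨[⟨i, m₁⟩], [⟨i, mk⟩], by simp [hl]⟩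
      have hmidlen : middle.length + 1 = k := by
        rw [hl] at hlen'; simp at hlen'; omega
      by_cases h1 : mk * m₁ = 1
      · -- cancellation: new word is just middle
        set w'' : Word G := ⟨middle, hmid_ne1, hmid_chain⟩ with hw''
        have hprod : Word.prod w'' = CoprodI.of (mk * m₁) * Q := by
          rw [h1, map_one, one_mul, word_prod_def]
        have hVW : W₀⁻¹ * V * W₀ = Word.prod w'' := by rw [hconj, hprod]
        have hlen'' : (Word.equiv (W₀⁻¹ * V * W₀)).toList.length ≤ k := by
          rw [hVW, equiv_prod]
          simp [hw'']; omega
        have hpow : (W₀⁻¹ * V * W₀) ^ n = 1 := by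
          rw [show W₀⁻¹ * V * W₀ = W₀⁻¹ * V * W₀⁻¹⁻¹ by rw [inv_inv], conj_pow, hVn]
          group
        obtain ⟨W₁, i₂, g, hg⟩ := ih (W₀⁻¹ * V * W₀) hlen'' hpow
        exact ⟨W₀ * W₁, i₂, g, by rw [← hg]; group⟩
      · -- no cancellation: new word is (mk*m₁) :: middle
        have hchain : (⟨i, mk * m₁⟩ :: middle : List (Σ i, G i)).Chain'
            fun a b => a.fst ≠ b.fst := by
          rw [List.Chain', List.isChain_cons]
          refine ⟨?_, hmid_chain⟩
          intro y hy
          cases middle with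
          | nil => simp at hy
          | cons b rest =>
            simp at hy
            subst hy
            have := (Word.equiv V).chain_ne
            rw [hl] at this
            simp [List.Chain', List.isChain_cons_cons] at this
            exact this.1
        have hne1 : ∀ a ∈ (⟨i, mk * m₁⟩ :: middle : List (Σ i, G i)),
            a.snd ≠ (1 : G a.fst) := by
          intro a ha
          rw [List.mem_cons] at ha
          rcases ha with rfl | ha
          · exact h1
          · exact hmid_ne1 a ha
        set w'' : Word G := ⟨⟨i, mk * m₁⟩ :: middle, hne1, hchain⟩ with hw''
        have hprod : Word.prod w'' = CoprodI.of (mk * m₁) * Q := by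
          rw [word_prod_def]; simp [hw'', hQdef]
        have hVW : W₀⁻¹ * V * W₀ = Word.prod w'' := by rw [hconj, hprod]
        have hlen'' : (Word.equiv (W₀⁻¹ * V * W₀)).toList.length ≤ k := by
          rw [hVW, equiv_prod]
          simp [hw'']; omega
        have hpow : (W₀⁻¹ * V * W₀) ^ n = 1 := by
          rw [show W₀⁻¹ * V * W₀ = W₀⁻¹ * V * W₀⁻¹⁻¹ by rw [inv_inv], conj_pow, hVn]
          group
        obtain ⟨W₁, i₂, g, hg⟩ := ih (W₀⁻¹ * V * W₀) hlen'' hpow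
        exact ⟨W₀ * W₁, i₂, g, by rw [← hg]; group⟩
    · -- cyclically reduced of length ≥ 2: contradiction
      exfalso
      have hne : Word.equiv V ≠ Word.empty := by
        intro h; rw [h] at hl; simp [Word.empty] at hl
      obtain ⟨i', j', w', hw'⟩ := NeWord.of_word (Word.equiv V) hne
      have hlist : w'.toList = (Word.equiv V).toList := congrArg Word.toList hw'
      have hi : i' = i := by
        have h := w'.toList_head?
        rw [hlist, hl] at h
        have := congrArg (fun o => Option.map Sigma.fst o) h
        simpa using this.symm
      have hj : j' = j := by
        have h := w'.toList_getLast?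
        rw [hlist, hl, List.concat_eq_append, ← List.cons_append, List.getLast?_concat] at h
        have := congrArg (fun o => Option.map Sigma.fst o) h
        simpa using this.symm
      have hij' : i' ≠ j' := by rw [hi, hj]; exact hij
      apply neword_pow_ne_one hij' w' n hn
      have : w'.prod = V := by
        show Word.prod w'.toWord = V
        rw [show w'.toWord = Word.equiv V from hw', prod_equiv]
      rw [this, hVn]

end Main

open Monoid Monoid.CoprodI

universe u v

private def Fac (A : Type u) (B : Type v) : Bool → Type (max u v) :=
  fun b => cond b (ULift.{v} A) (ULift.{u} B)

private instance facGroup (A : Type u) (B : Type v) [Group A] [Group B] :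
    ∀ b, Group (Fac A B b)
  | true => inferInstanceAs (Group (ULift A))
  | false => inferInstanceAs (Group (ULift B))

private def phi (A : Type u) (B : Type v) [Group A] [Group B] :
    Monoid.Coprod A B →* CoprodI (Fac A B) :=
  Coprod.lift
    ((CoprodI.of (M := Fac A B) (i := true)).comp
      (MulEquiv.ulift.symm : A ≃* ULift A).toMonoidHom)
    ((CoprodI.of (M := Fac A B) (i := false)).comp
      (MulEquiv.ulift.symm : B ≃* ULift B).toMonoidHom)

private def psi (A : Type u) (B : Type v) [Group A] [Group B] :
    CoprodI (Fac A B) →* Monoid.Coprod A B :=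
  CoprodI.lift (fun b => match b with
    | true => Coprod.inl.comp (MulEquiv.ulift (α := A)).toMonoidHom
    | false => Coprod.inr.comp (MulEquiv.ulift (α := B)).toMonoidHom)

private lemma psi_phi (A : Type u) (B : Type v) [Group A] [Group B]
    (x : Monoid.Coprod A B) : psi A B (phi A B x) = x := by
  have : (psi A B).comp (phi A B) = MonoidHom.id _ := by
    apply Coprod.hom_ext
    · ext a
      simp only [MonoidHom.comp_apply, MonoidHom.id_apply, psi, phi,
        Coprod.lift_apply_inl, MonoidHom.coe_comp, Function.comp_apply,
        MulEquiv.coe_toMonoidHom, CoprodI.lift_of]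
      rfl
    · ext b
      simp only [MonoidHom.comp_apply, MonoidHom.id_apply, psi, phi,
        Coprod.lift_apply_inr, MonoidHom.coe_comp, Function.comp_apply,
        MulEquiv.coe_toMonoidHom, CoprodI.lift_of]
      rfl
  calc psi A B (phi A B x) = ((psi A B).comp (phi A B)) x := rfl
    _ = x := by rw [this]; rfl

theorem stmt8 {A B : Type*} [Group A] [Group B] [Nontrivial A] [Nontrivial B]
    (V : Monoid.Coprod A B) (n : ℕ) (hn : 1 ≤ n) (h : V ^ n = 1) :
    ∃ W : Monoid.Coprod A B,
      (∃ a : A, W⁻¹ * V * W = Monoid.Coprod.inl a) ∨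
      (∃ b : B, W⁻¹ * V * W = Monoid.Coprod.inr b) := by
  classical
  have hφ : (phi A B V) ^ n = 1 := by rw [← map_pow, h, map_one]
  obtain ⟨W', i, g, hg⟩ :=
    main_coprodI (G := Fac A B) n hn
      ((Word.equiv (phi A B V)).toList.length) (phi A B V) le_rfl hφ
  refine ⟨psi A B W', ?_⟩
  have key : (psi A B W')⁻¹ * V * psi A B W' = psi A B (CoprodI.of g) := by
    rw [← hg]
    simp only [map_mul, map_inv]
    rw [psi_phi]
  cases i with
  | false =>
    right
    exact ⟨MulEquiv.ulift g, by rw [key]; simp [psi, CoprodI.lift_of]; rfl⟩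
  | true =>
    left
    exact ⟨MulEquiv.ulift g, by rw [key]; simp [psi, CoprodI.lift_of]; rfl⟩
end

section
/- Let G be any group, a, b ∈ G with b³ = 1 and b ≠ 1 (so b⁻¹ = b²), a² = 1. Then the element V = ab satisfies: V⁶ equals the commutator [b⁻¹aba, b(ab)²], and consequently V⁶ lies in the commutator subgroup of G. -/
theorem stmt12 {G : Type*} [Group G] (a b : G) (ha : a ^ 2 = 1) (hb : b ^ 3 = 1)
    (hb1 : b ≠ 1) (V : G) (hV : V = a * b) :
    V ^ 6 = (b⁻¹ * a * b * a)⁻¹ * (b * (a * b) ^ 2)⁻¹ * (b⁻¹ * a * b * a) * (b * (a * b) ^ 2) ∧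
    V ^ 6 ∈ commutator G := by
  have ha2 : a * a = 1 := by rw [← pow_two]; exact ha
  have hb3 : b * (b * b) = 1 := by simpa [pow_succ, mul_assoc] using hb
  have ha' : ∀ x : G, a * (a * x) = x := fun x => by rw [← mul_assoc, ha2, one_mul]
  have hb' : ∀ x : G, b * (b * (b * x)) = x := fun x => by
    rw [← mul_assoc, ← mul_assoc, mul_assoc b b b, hb3, one_mul]
  have hainv : a⁻¹ = a := by rw [eq_comm, eq_inv_iff_mul_eq_one, ha2]
  have hbinv : b⁻¹ = b * b := by
    rw [eq_comm, eq_inv_iff_mul_eq_one, mul_assoc, hb3]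
  have heq : V ^ 6 = (b⁻¹ * a * b * a)⁻¹ * (b * (a * b) ^ 2)⁻¹ * (b⁻¹ * a * b * a) * (b * (a * b) ^ 2) := by
    subst hV
    simp only [hbinv, mul_inv_rev, hainv, pow_succ, pow_zero, one_mul, mul_assoc, ha', hb']
  refine ⟨heq, ?_⟩
  rw [heq]
  open scoped commutatorElement in
  have : (b⁻¹ * a * b * a)⁻¹ * (b * (a * b) ^ 2)⁻¹ * (b⁻¹ * a * b * a) * (b * (a * b) ^ 2)
      = ⁅(b⁻¹ * a * b * a)⁻¹, (b * (a * b) ^ 2)⁻¹⁆ := by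
    rw [commutatorElement_def]; group
  rw [this, commutator_def]
  exact Subgroup.commutator_mem_commutator (Subgroup.mem_top _) (Subgroup.mem_top _)
end
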